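/- For any finite weighted graph with at least one edge and no isolated vertices, the dual Cheeger constant satisfies h̄ > 1/2. -/

import Mathlib

/-!
Take a bipartition `(A, Aᶜ)` of maximal cut weight. Moving one vertex across cannot increase the
cut, so every vertex sends at least half of its degree to the other side; summing, each side's
volume is at most twice the cut, so `2 cut / (vol A + vol Aᶜ) ≥ 1/2`, strictly as soon as one
vertex is strictly unbalanced. If a maximal cut is balanced at some `x`, then `x` has a
neighbour `y` on its own side; either `y` is unbalanced, or moving `y` across yields another
maximal cut, in which `x` is unbalanced.
-/

open Finset

namespace WeightedGraph

variable {V M : Type*} [Fintype V] [DecidableEq V]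

section AddCommGroup

variable [AddCommGroup M] (b : V → V → M)

def cut (A : Finset V) : M := ∑ x ∈ A, ∑ y ∈ Aᶜ, b x y

variable {b}

theorem sum_degree_eq (A : Finset V) :
    ∑ x ∈ A, ∑ y, b x y = ∑ x ∈ A, (∑ y ∈ A, b x y + ∑ y ∈ Aᶜ, b x y) :=
  sum_congr rfl fun _ _ => (sum_add_sum_compl A _).symm

theorem cut_compl (hsymm : ∀ x y, b x y = b y x) (A : Finset V) : cut b Aᶜ = cut b A := by
  rw [cut, cut, compl_compl, sum_comm]
  exact sum_congr rfl fun _ _ => sum_congr rfl fun _ _ => hsymm _ _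

theorem cut_erase (hsymm : ∀ x y, b x y = b y x) (hloop : ∀ x, b x x = 0) {A : Finset V} {y : V}
    (hy : y ∈ A) : cut b (A.erase y) = cut b A + ∑ z ∈ A, b y z - ∑ z ∈ Aᶜ, b y z := by
  have hinto : ∑ x ∈ A.erase y, b x y = ∑ z ∈ A, b y z := by
    rw [← sum_erase A (hloop y)]
    exact sum_congr rfl fun x _ => hsymm x y
  calc cut b (A.erase y) = ∑ x ∈ A.erase y, (b x y + ∑ z ∈ Aᶜ, b x z) := by
        rw [cut, compl_erase]
        exact sum_congr rfl fun x _ => sum_insert (notMem_compl.mpr hy)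
    _ = ∑ z ∈ A, b y z + (cut b A - ∑ z ∈ Aᶜ, b y z) := by
        rw [sum_add_distrib, hinto, cut, sum_erase_eq_sub hy]
    _ = cut b A + ∑ z ∈ A, b y z - ∑ z ∈ Aᶜ, b y z := by abel

end AddCommGroup

section LinearOrder

variable [AddCommGroup M] [LinearOrder M] {b : V → V → M}

variable (b) in
def IsMaxCut (A : Finset V) : Prop := ∀ B, cut b B ≤ cut b A

variable (b) in
theorem exists_isMaxCut : ∃ A, IsMaxCut b A :=
  Finite.exists_max (cut b)

theorem IsMaxCut.compl (hsymm : ∀ x y, b x y = b y x) {A : Finset V} (hA : IsMaxCut b A) :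
    IsMaxCut b Aᶜ := by
  intro B
  rw [cut_compl hsymm]
  exact hA B

theorem exists_isMaxCut_mem (hsymm : ∀ x y, b x y = b y x) (x : V) :
    ∃ A, IsMaxCut b A ∧ x ∈ A := by
  obtain ⟨A, hA⟩ := exists_isMaxCut b
  by_cases hx : x ∈ A
  · exact ⟨A, hA, hx⟩
  · exact ⟨Aᶜ, hA.compl hsymm, mem_compl.mpr hx⟩

theorem IsMaxCut.erase (hsymm : ∀ x y, b x y = b y x) (hloop : ∀ x, b x x = 0)
    {A : Finset V} (hA : IsMaxCut b A) {y : V} (hy : y ∈ A)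
    (hbal : ∑ z ∈ A, b y z = ∑ z ∈ Aᶜ, b y z) : IsMaxCut b (A.erase y) := by
  intro B
  rw [cut_erase hsymm hloop hy, hbal, add_sub_cancel_right]
  exact hA B

end LinearOrder

section OrderedAddCommGroup

variable [AddCommGroup M] [LinearOrder M] [IsOrderedAddMonoid M] {b : V → V → M}

theorem IsMaxCut.sum_le_sum_compl (hsymm : ∀ x y, b x y = b y x) (hloop : ∀ x, b x x = 0)
    {A : Finset V} (hA : IsMaxCut b A) {y : V} (hy : y ∈ A) :
    ∑ z ∈ A, b y z ≤ ∑ z ∈ Aᶜ, b y z := by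
  have h := hA (A.erase y)
  rwa [cut_erase hsymm hloop hy, add_sub_assoc, add_le_iff_nonpos_right, sub_nonpos] at h

theorem IsMaxCut.sum_degree_le (hsymm : ∀ x y, b x y = b y x) (hloop : ∀ x, b x x = 0)
    {A : Finset V} (hA : IsMaxCut b A) :
    ∑ x ∈ A, ∑ y, b x y ≤ cut b A + cut b A := by
  rw [sum_degree_eq, cut, ← sum_add_distrib]
  exact sum_le_sum fun x hx => add_le_add_left (hA.sum_le_sum_compl hsymm hloop hx) _

theorem IsMaxCut.sum_degree_lt (hsymm : ∀ x y, b x y = b y x) (hloop : ∀ x, b x x = 0)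
    {A : Finset V} (hA : IsMaxCut b A) {y : V} (hy : y ∈ A)
    (hlt : ∑ z ∈ A, b y z < ∑ z ∈ Aᶜ, b y z) :
    ∑ x ∈ A, ∑ z, b x z < cut b A + cut b A := by
  rw [sum_degree_eq, cut, ← sum_add_distrib]
  refine sum_lt_sum (fun x hx => ?_) ⟨y, hy, add_lt_add_left hlt _⟩
  exact add_le_add_left (hA.sum_le_sum_compl hsymm hloop hx) _

theorem exists_isMaxCut_lt [Nonempty V] (hsymm : ∀ x y, b x y = b y x) (hloop : ∀ x, b x x = 0)
    (hdeg : ∀ x, 0 < ∑ y, b x y) :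
    ∃ A, IsMaxCut b A ∧ ∃ x ∈ A, ∑ z ∈ A, b x z < ∑ z ∈ Aᶜ, b x z := by
  obtain ⟨x⟩ := ‹Nonempty V›
  obtain ⟨A, hA, hx⟩ := exists_isMaxCut_mem hsymm x
  rcases (hA.sum_le_sum_compl hsymm hloop hx).lt_or_eq with hxlt | hxbal
  · exact ⟨A, hA, x, hx, hxlt⟩
  obtain ⟨y, hy, hxy⟩ : ∃ y ∈ A, 0 < b x y := by
    by_contra! hnonpos
    have hdegx := hdeg x
    rw [← sum_add_sum_compl A, ← hxbal] at hdegx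
    exact (add_nonpos (sum_nonpos hnonpos) (sum_nonpos hnonpos)).not_gt hdegx
  rcases (hA.sum_le_sum_compl hsymm hloop hy).lt_or_eq with hylt | hybal
  · exact ⟨A, hA, y, hy, hylt⟩
  have hyx : y ≠ x := by
    rintro rfl
    exact (hloop y ▸ hxy).false
  refine ⟨A.erase y, hA.erase hsymm hloop hy hybal, x, mem_erase.mpr ⟨hyx.symm, hx⟩, ?_⟩
  rw [sum_erase_eq_sub hy, compl_erase, sum_insert (notMem_compl.mpr hy), hxbal]
  exact (sub_lt_self _ hxy).trans (lt_add_of_pos_left _ hxy)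

end OrderedAddCommGroup

end WeightedGraph

open WeightedGraph in
theorem dual_cheeger_gt_half_general
    {V : Type*} [Fintype V] {F : Type*} [Field F] [LinearOrder F] [IsStrictOrderedRing F]
    (b : V → V → F)
    (hsymm : ∀ x y, b x y = b y x)
    (hloop : ∀ x, b x x = 0)
    (hiso : ∀ x, 0 < ∑ y, b x y)
    (hbar : F)
    (hmax : IsGreatest {r : F | ∃ V1 V2 : Finset V, V1.Nonempty ∧ V2.Nonempty ∧
      Disjoint V1 V2 ∧
      r = 2 * (∑ x ∈ V1, ∑ y ∈ V2, b x y) /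
        ((∑ x ∈ V1, ∑ y, b x y) + (∑ x ∈ V2, ∑ y, b x y))} hbar) :
    1 / 2 < hbar := by
  classical
  obtain ⟨V1, -, ⟨v, -⟩, -⟩ := hmax.1
  have : Nonempty V := ⟨v⟩
  obtain ⟨A, hA, y, hy, hlt⟩ := exists_isMaxCut_lt hsymm hloop hiso
  have hAc : Aᶜ.Nonempty := by
    by_contra! hempty
    rw [hempty, sum_empty, (compl_eq_empty_iff A).mp hempty] at hlt
    exact (hiso y).not_gt hlt
  have hvolA : 0 < ∑ x ∈ A, ∑ z, b x z := sum_pos (fun x _ => hiso x) ⟨y, hy⟩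
  have hvolAc : 0 < ∑ x ∈ Aᶜ, ∑ z, b x z := sum_pos (fun x _ => hiso x) hAc
  have hltA := hA.sum_degree_lt hsymm hloop hy hlt
  have hleAc := (hA.compl hsymm).sum_degree_le hsymm hloop
  rw [cut_compl hsymm] at hleAc
  refine lt_of_lt_of_le ?_ (hmax.2 ⟨A, Aᶜ, ⟨y, hy⟩, hAc, disjoint_compl_right, rfl⟩)
  rw [div_lt_div_iff₀ two_pos (add_pos hvolA hvolAc)]
  unfold cut at hltA hleAc
  linarith

theorem dual_cheeger_gt_half
    {V : Type*} [Fintype V] [DecidableEq V] {F : Type*} [Field F] [LinearOrder F] [IsStrictOrderedRing F]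
    (b : V → V → F)
    (hsymm : ∀ x y, b x y = b y x)
    (hnn : ∀ x y, 0 ≤ b x y)
    (hloop : ∀ x, b x x = 0)
    (hiso : ∀ x, 0 < ∑ y, b x y)
    (hedge : ∃ x y, 0 < b x y)
    (hbar : F)
    (hmax : IsGreatest {r : F | ∃ V1 V2 : Finset V, V1.Nonempty ∧ V2.Nonempty ∧
      Disjoint V1 V2 ∧
      r = 2 * (∑ x ∈ V1, ∑ y ∈ V2, b x y) /
        ((∑ x ∈ V1, ∑ y, b x y) + (∑ x ∈ V2, ∑ y, b x y))} hbar) :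
    1 / 2 < hbar :=
  dual_cheeger_gt_half_general b hsymm hloop hiso hbar hmax
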